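/- Let G be a monotone class of graphs, H a graph, and L an essential G-duplicable independent collection of separations of H. Let H' be the graph obtained from H by adding edges so that A∩B is a clique for every (A,B) ∈ L. Then some subdivision of H', in which each edge is subdivided between 0 and |V(H)|−2 times, belongs to G. -/

import Mathlib

def IsSeparation {V : Type} (G : SimpleGraph V) (p : Set V × Set V) : Prop :=
  p.1 ∪ p.2 = Set.univ ∧ ∀ a ∈ p.1 \ p.2, ∀ b ∈ p.2 \ p.1, ¬ G.Adj a b

def IsIndepCollection {V : Type} (G : SimpleGraph V) (C : Set (Set V × Set V)) : Prop :=
  (∀ p ∈ C, IsSeparation G p ∧ (p.1 \ p.2).Nonempty) ∧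
  ∀ p ∈ C, ∀ q ∈ C, p ≠ q → p.1 ⊆ q.2 ∧ q.1 ⊆ p.2

/-- A collection `L` of separations of `H` is essential if for every `(A,B) ∈ L`, every
vertex of `A ∩ B` has a neighbor in `A \ B` and `H[A \ B]` is connected. -/
def EssentialCollection {V : Type} (H : SimpleGraph V) (L : Set (Set V × Set V)) : Prop :=
  ∀ p ∈ L, (∀ v ∈ p.1 ∩ p.2, ∃ u ∈ p.1 \ p.2, H.Adj v u) ∧
    (H.induce (p.1 \ p.2)).Connected

def wedgeRel {V : Type} (H : SimpleGraph V) (Z : Set V) (k : ℕ) :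
    (↥Z ⊕ (↥(Zᶜ) × Fin k)) → (↥Z ⊕ (↥(Zᶜ) × Fin k)) → Prop
  | Sum.inl z, Sum.inl z' => H.Adj z z'
  | Sum.inl z, Sum.inr (v, _) => H.Adj z v
  | Sum.inr (v, _), Sum.inl z => H.Adj v z
  | Sum.inr (v, i), Sum.inr (w, j) => i = j ∧ H.Adj v w

/-- `H ∧_k Z`: `k` disjoint copies of `H` with the copies of each `z ∈ Z` identified. -/
def wedge {V : Type} (H : SimpleGraph V) (Z : Set V) (k : ℕ) :
    SimpleGraph (↥Z ⊕ (↥(Zᶜ) × Fin k)) :=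
  SimpleGraph.fromRel (wedgeRel H Z k)

/-- `⋂_{(A,B) ∈ C} B`. -/
def interB {V : Type} (C : Set (Set V × Set V)) : Set V := ⋂ p ∈ C, p.2

/-- `H ∧_k C := H ∧_k (⋂_{(A,B) ∈ C} B)`. -/
def wedgeC {V : Type} (H : SimpleGraph V) (C : Set (Set V × Set V)) (k : ℕ) :
    SimpleGraph (↥(interB C) ⊕ (↥((interB C)ᶜ) × Fin k)) :=
  wedge H (interB C) k

/-- A class of graphs, given as a predicate on graphs over arbitrary vertex types. -/
abbrev GraphClass : Type 1 := ∀ (U : Type), SimpleGraph U → Prop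

/-- `H` is isomorphic to a subgraph of `G`. -/
def SubgraphOf {V W : Type} (H : SimpleGraph V) (G : SimpleGraph W) : Prop :=
  ∃ f : V → W, Function.Injective f ∧ ∀ ⦃u v⦄, H.Adj u v → G.Adj (f u) (f v)

/-- A class of (finite) graphs is monotone if it is closed under taking subgraphs. -/
def MonotoneClass (𝒢 : GraphClass) : Prop :=
  ∀ (V W : Type) [Fintype V] [Fintype W] (H : SimpleGraph V) (G : SimpleGraph W),
    SubgraphOf H G → 𝒢 W G → 𝒢 V H

/-- An independent collection `L` of separations of `H` is `𝒢`-duplicable if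
`H ∧_k L ∈ 𝒢` for infinitely many positive integers `k`. -/
def Duplicable (𝒢 : GraphClass) {V : Type} (H : SimpleGraph V)
    (L : Set (Set V × Set V)) : Prop :=
  {k : ℕ | 0 < k ∧ 𝒢 _ (wedgeC H L k)}.Infinite

/-- `G` is a subdivision of `H` in which each edge of `H` is subdivided between `0` and `n`
times: branch vertices are given by an injective `f`, edges of `H` correspond to internally
disjoint paths of `G` of length at most `n + 1`, and every vertex and edge of `G` lies on
these paths. -/
def IsSubdivisionLE {V W : Type} (n : ℕ) (G : SimpleGraph W) (H : SimpleGraph V) : Prop :=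
  ∃ (f : V → W) (p : ∀ ⦃u v : V⦄, H.Adj u v → G.Walk (f u) (f v)),
    Function.Injective f ∧
    (∀ ⦃u v⦄ (h : H.Adj u v), (p h).IsPath ∧ (p h).length ≤ n + 1) ∧
    (∀ ⦃u v⦄ (h : H.Adj u v) (x : W), x ∈ (p h).support → x ≠ f u → x ≠ f v →
      (∀ z, f z ≠ x) ∧
      ∀ ⦃u' v'⦄ (h' : H.Adj u' v'), x ∈ (p h').support → s(u, v) = s(u', v')) ∧
    (∀ x : W, (∃ z, f z = x) ∨ ∃ (u v : V) (h : H.Adj u v), x ∈ (p h).support) ∧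
    (∀ e ∈ G.edgeSet, ∃ (u v : V) (h : H.Adj u v), e ∈ (p h).edges)

/-! Take `k > |Sym2 V|` with `H ∧_k L ∈ 𝒢` and reserve one copy of `H - ⋂ B` for every pair of
vertices; copy `0` hosts the branch vertices and the edges of `H`. If `u, v ∈ A ∩ B` for some
`(A, B) ∈ L`, then independence puts `u` and `v` into every `B`, so they are shared by all copies,
and essentiality yields a `u`–`v` path through the connected side `A \ B`, which we route through
the copy reserved for `s(u, v)`. These paths are internally disjoint and have fewer than `|V|`
edges; their union is a subgraph of `H ∧_k L`, hence lies in `𝒢`, and is the required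
subdivision of `H'`. -/

open SimpleGraph

section PathSystem

variable {V W : Type} {G : SimpleGraph W} {H : SimpleGraph V} {f : V → W}
  {p : ∀ ⦃u v : V⦄, H.Adj u v → G.Walk (f u) (f v)}

def IsInternallyDisjoint (f : V → W) (p : ∀ ⦃u v : V⦄, H.Adj u v → G.Walk (f u) (f v)) :
    Prop :=
  ∀ ⦃u v⦄ (h : H.Adj u v) (x : W), x ∈ (p h).support → x ≠ f u → x ≠ f v →
    (∀ z, f z ≠ x) ∧ ∀ ⦃u' v'⦄ (h' : H.Adj u' v'), x ∈ (p h').support → s(u, v) = s(u', v')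

theorem isInternallyDisjoint_of_labels {β : Type} (κ : W → β) (ι : Sym2 V → β)
    (hι : Function.Injective ι) (hf : ∀ z e, κ (f z) ≠ ι e)
    (hp : ∀ ⦃u v⦄ (h : H.Adj u v), ∀ x ∈ (p h).support, x = f u ∨ x = f v ∨ κ x = ι s(u, v)) :
    IsInternallyDisjoint f p := by
  intro u v h x hx hxu hxv
  have hκ : κ x = ι s(u, v) := ((hp h x hx).resolve_left hxu).resolve_left hxv
  refine ⟨fun z hz => hf z s(u, v) (hz ▸ hκ), fun u' v' h' hx' => hι ?_⟩
  rcases hp h' x hx' with rfl | rfl | hκ'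
  · exact absurd hκ (hf u' _)
  · exact absurd hκ (hf v' _)
  · exact hκ.symm.trans hκ'

def pathUnion (f : V → W) (p : ∀ ⦃u v : V⦄, H.Adj u v → G.Walk (f u) (f v)) :
    G.Subgraph where
  verts := Set.range f ∪ {x | ∃ (u v : V) (h : H.Adj u v), x ∈ (p h).support}
  Adj a b := ∃ (u v : V) (h : H.Adj u v), s(a, b) ∈ (p h).edges
  adj_sub := fun ⟨_, _, h, he⟩ => (p h).adj_of_mem_edges he
  edge_vert := fun ⟨u, v, h, he⟩ => Or.inr ⟨u, v, h, (p h).fst_mem_support_of_mem_edges he⟩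
  symm := ⟨fun _ _ ⟨u, v, h, he⟩ => ⟨u, v, h, Sym2.eq_swap ▸ he⟩⟩

theorem apply_mem_pathUnion_verts (v : V) : f v ∈ (pathUnion f p).verts :=
  .inl (Set.mem_range_self v)

theorem toSubgraph_le_pathUnion {u v : V} (h : H.Adj u v) :
    (p h).toSubgraph ≤ pathUnion f p :=
  ⟨fun _ hx => Or.inr ⟨u, v, h, (p h).mem_verts_toSubgraph.1 hx⟩,
    fun _ _ hab => ⟨u, v, h, Walk.adj_toSubgraph_iff_mem_edges.1 hab⟩⟩

def toPathUnion (p : ∀ ⦃u v : V⦄, H.Adj u v → G.Walk (f u) (f v)) {u v : V} (h : H.Adj u v) :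
    (pathUnion f p).coe.Walk ⟨f u, apply_mem_pathUnion_verts u⟩
      ⟨f v, apply_mem_pathUnion_verts v⟩ :=
  (p h).mapToSubgraph.map (Subgraph.inclusion (toSubgraph_le_pathUnion h))

theorem map_hom_toPathUnion {u v : V} (h : H.Adj u v) :
    (toPathUnion p h).map (pathUnion f p).hom = p h :=
  (Walk.map_map _ _ _).trans (p h).map_mapToSubgraph_hom

theorem mem_support_toPathUnion {u v : V} (h : H.Adj u v) (x : (pathUnion f p).verts) :
    x ∈ (toPathUnion p h).support ↔ x.1 ∈ (p h).support := by
  calc x ∈ (toPathUnion p h).support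
      ↔ x.1 ∈ ((toPathUnion p h).map (pathUnion f p).hom).support := by
        rw [Walk.support_map]; exact (List.mem_map_of_injective Subgraph.hom_injective).symm
    _ ↔ x.1 ∈ (p h).support := by rw [map_hom_toPathUnion]; rfl

theorem mem_edges_toPathUnion {u v : V} (h : H.Adj u v) (e : Sym2 (pathUnion f p).verts) :
    e ∈ (toPathUnion p h).edges ↔ e.map Subtype.val ∈ (p h).edges := by
  calc e ∈ (toPathUnion p h).edges
      ↔ e.map Subtype.val ∈ ((toPathUnion p h).map (pathUnion f p).hom).edges := by
        rw [Walk.edges_map]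
        exact (List.mem_map_of_injective (Sym2.map.injective Subgraph.hom_injective)).symm
    _ ↔ e.map Subtype.val ∈ (p h).edges := by rw [map_hom_toPathUnion]; rfl

theorem exists_subgraphOf_isSubdivisionLE [Finite W] {n : ℕ} (hf : Function.Injective f)
    (hp : ∀ ⦃u v⦄ (h : H.Adj u v), (p h).IsPath ∧ (p h).length ≤ n + 1)
    (hdisj : IsInternallyDisjoint f p) :
    ∃ (W' : Type) (_ : Fintype W') (G' : SimpleGraph W'),
      SubgraphOf G' G ∧ IsSubdivisionLE n G' H := by
  set S := pathUnion f p
  refine ⟨S.verts, Fintype.ofFinite _, S.coe,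
    ⟨Subtype.val, Subtype.val_injective, fun _ _ hab => S.adj_sub hab⟩,
    fun v => ⟨f v, apply_mem_pathUnion_verts v⟩, fun _ _ h => toPathUnion p h,
    fun a b hab => hf (congrArg Subtype.val hab), ?_, ?_, ?_, ?_⟩
  · intro u v h
    rw [← Walk.isPath_map_iff_of_injective Subgraph.hom_injective, ← Walk.length_map S.hom,
      map_hom_toPathUnion]
    exact hp h
  · intro u v h x hx hxu hxv
    obtain ⟨hfx, hshared⟩ := hdisj h x ((mem_support_toPathUnion h x).1 hx)
      (fun hx' => hxu (Subtype.ext hx')) (fun hx' => hxv (Subtype.ext hx'))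
    exact ⟨fun z hz => hfx z (congrArg Subtype.val hz),
      fun u' v' h' hx' => hshared h' ((mem_support_toPathUnion h' x).1 hx')⟩
  · rintro ⟨x, ⟨z, rfl⟩ | ⟨u, v, h, hx⟩⟩
    · exact Or.inl ⟨z, rfl⟩
    · exact Or.inr ⟨u, v, h, (mem_support_toPathUnion h _).2 hx⟩
  · intro e he
    induction e with
    | _ a b =>
      obtain ⟨u, v, h, hab⟩ := he
      exact ⟨u, v, h, (mem_edges_toPathUnion h _).2 hab⟩

end PathSystem

section Separations

variable {V : Type} {H : SimpleGraph V}

def separatorCompletion (H : SimpleGraph V) (L : Set (Set V × Set V)) : SimpleGraph V :=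
  SimpleGraph.fromRel fun a b => H.Adj a b ∨ ∃ p ∈ L, a ∈ p.1 ∩ p.2 ∧ b ∈ p.1 ∩ p.2

theorem separatorCompletion_adj {L : Set (Set V × Set V)} {u v : V} :
    (separatorCompletion H L).Adj u v ↔
      H.Adj u v ∨ u ≠ v ∧ ∃ p ∈ L, u ∈ p.1 ∩ p.2 ∧ v ∈ p.1 ∩ p.2 := by
  simp only [separatorCompletion, fromRel_adj]
  constructor
  · rintro ⟨huv, (h | h) | (h | ⟨p, hp, hv, hu⟩)⟩
    exacts [.inl h, .inr ⟨huv, h⟩, .inl h.symm, .inr ⟨huv, p, hp, hu, hv⟩]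
  · rintro (h | ⟨huv, h⟩)
    exacts [⟨h.ne, .inl (.inl h)⟩, ⟨huv, .inl (.inr h)⟩]

theorem exists_isPath_of_connected_induce {D : Set V} (hD : (H.induce D).Connected)
    {u v u' v' : V} (huv : u ≠ v) (hu : u ∉ D) (hv : v ∉ D) (hu' : u' ∈ D) (hv' : v' ∈ D)
    (huu' : H.Adj u u') (hv'v : H.Adj v' v) :
    ∃ q : H.Walk u v, q.IsPath ∧ ∀ x ∈ q.support, x = u ∨ x = v ∨ x ∈ D := by
  obtain ⟨r, hr⟩ := hD.exists_isPath ⟨u', hu'⟩ ⟨v', hv'⟩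
  obtain ⟨r', hr', hr'D⟩ : ∃ r' : H.Walk u' v', r'.IsPath ∧ ∀ x ∈ r'.support, x ∈ D := by
    let φ := (Embedding.induce (G := H) D).toHom
    refine ⟨r.map φ, hr.map (Embedding.induce (G := H) D).injective, fun x hx => ?_⟩
    have hx : x ∈ (r.map φ).support := hx
    rw [Walk.support_map, List.mem_map] at hx
    obtain ⟨y, -, rfl⟩ := hx
    exact y.2
  refine ⟨(r'.concat hv'v).cons huu', ?_, ?_⟩
  · refine (hr'.concat (fun h => hv (hr'D _ h)) hv'v).cons ?_
    rw [Walk.support_concat, List.mem_append, List.mem_singleton, not_or]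
    exact ⟨fun h => hu (hr'D _ h), huv⟩
  · intro x hx
    rw [Walk.support_cons, Walk.support_concat, List.mem_cons, List.mem_append,
      List.mem_singleton] at hx
    rcases hx with rfl | hx | rfl
    exacts [.inl rfl, .inr (.inr (hr'D x hx)), .inr (.inl rfl)]

theorem inter_subset_interB {L : Set (Set V × Set V)} (hL : IsIndepCollection H L)
    {p : Set V × Set V} (hp : p ∈ L) : p.1 ∩ p.2 ⊆ interB L := by
  intro v hv
  refine Set.mem_iInter₂.2 fun q hq => ?_
  by_cases hpq : p = q
  · exact hpq ▸ hv.2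
  · exact (hL.2 p hp q hq hpq).1 hv.1

theorem sdiff_subset_compl_interB {L : Set (Set V × Set V)} {p : Set V × Set V} (hp : p ∈ L) :
    p.1 \ p.2 ⊆ (interB L)ᶜ :=
  fun _ hv hvZ => hv.2 (Set.mem_iInter₂.1 hvZ p hp)

end Separations

section Wedge

variable {V : Type} (H : SimpleGraph V) (Z : Set V) {k : ℕ}

open Classical in
noncomputable def wedgeCopy (i : Fin k) : H →g wedge H Z k where
  toFun v := if h : v ∈ Z then .inl ⟨v, h⟩ else .inr (⟨v, h⟩, i)
  map_rel' {u v} huv := by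
    by_cases hu : u ∈ Z <;> by_cases hv : v ∈ Z <;>
      simp [wedge, wedgeRel, hu, hv, huv, huv.ne]

def wedgeCopyIndex : (↥Z ⊕ (↥Zᶜ × Fin k)) → Option (Fin k) :=
  Sum.elim (fun _ => none) (fun x => some x.2)

variable {H Z}

theorem wedgeCopy_injective (i : Fin k) : Function.Injective (wedgeCopy H Z i) := by
  intro u v huv
  by_cases hu : u ∈ Z <;> by_cases hv : v ∈ Z <;> simp_all [wedgeCopy]

theorem wedgeCopy_of_mem {v : V} (hv : v ∈ Z) (i j : Fin k) :
    wedgeCopy H Z i v = wedgeCopy H Z j v := by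
  simp [wedgeCopy, hv]

theorem wedgeCopyIndex_wedgeCopy_of_notMem {v : V} (hv : v ∉ Z) (i : Fin k) :
    wedgeCopyIndex Z (wedgeCopy H Z i v) = some i := by
  simp [wedgeCopy, wedgeCopyIndex, hv]

theorem wedgeCopyIndex_wedgeCopy_ne {i j : Fin k} (hij : i ≠ j) (v : V) :
    wedgeCopyIndex Z (wedgeCopy H Z i v) ≠ some j := by
  by_cases hv : v ∈ Z <;> simp [wedgeCopy, wedgeCopyIndex, hv, hij]

end Wedge

theorem exists_wedge_path_of_separatorCompletion_adj {V : Type} [Fintype V] {H : SimpleGraph V}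
    {L : Set (Set V × Set V)} (hL : IsIndepCollection H L) (hess : EssentialCollection H L)
    {u v : V} (huv : (separatorCompletion H L).Adj u v)
    {k : ℕ} (i j : Fin k) :
    ∃ w : (wedge H (interB L) k).Walk (wedgeCopy H (interB L) i u) (wedgeCopy H (interB L) i v),
      w.IsPath ∧ w.length < Fintype.card V ∧
      ∀ x ∈ w.support, x = wedgeCopy H (interB L) i u ∨ x = wedgeCopy H (interB L) i v ∨
        wedgeCopyIndex (interB L) x = some j := by
  rcases separatorCompletion_adj.1 huv with hH | ⟨hne, p, hp, hu, hv⟩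
  · refine ⟨hH.toWalk.map (wedgeCopy H _ i), hH.isPath_toWalk.map (wedgeCopy_injective i),
      ?_, ?_⟩
    · rw [Walk.length_map]
      exact hH.isPath_toWalk.length_lt
    · intro x hx
      rw [Walk.support_map, hH.support_toWalk, List.map_cons, List.map_cons, List.map_nil,
        List.mem_cons, List.mem_singleton] at hx
      exact hx.imp_right .inl
  · obtain ⟨hnbr, hconn⟩ := hess p hp
    obtain ⟨u', hu', huu'⟩ := hnbr u hu
    obtain ⟨v', hv', hvv'⟩ := hnbr v hv
    obtain ⟨q, hq, hqD⟩ := exists_isPath_of_connected_induce hconn hne (fun h => h.2 hu.2)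
      (fun h => h.2 hv.2) hu' hv' huu' hvv'.symm
    have huZ := wedgeCopy_of_mem (H := H) (inter_subset_interB hL hp hu) j i
    have hvZ := wedgeCopy_of_mem (H := H) (inter_subset_interB hL hp hv) j i
    refine ⟨(q.map (wedgeCopy H _ j)).copy huZ hvZ, ?_, ?_, ?_⟩
    · rw [Walk.isPath_copy]
      exact hq.map (wedgeCopy_injective j)
    · rw [Walk.length_copy, Walk.length_map]
      exact hq.length_lt
    · intro x hx
      rw [Walk.support_copy, Walk.support_map, List.mem_map] at hx
      obtain ⟨y, hy, rfl⟩ := hx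
      rcases hqD y hy with rfl | rfl | hyD
      · exact .inl huZ
      · exact .inr (.inl hvZ)
      · exact .inr (.inr
          (wedgeCopyIndex_wedgeCopy_of_notMem (sdiff_subset_compl_interB hp hyD) j))

/-- Let `𝒢` be a monotone class of graphs, `H` a graph, and `L` an essential `𝒢`-duplicable
independent collection of separations of `H`.  Let `H'` be obtained from `H` by adding edges
so that `A ∩ B` is a clique for every `(A,B) ∈ L`.  Then some subdivision of `H'`, in which
each edge is subdivided between `0` and `|V(H)| − 2` times, belongs to `𝒢`. -/
theorem stmt14 (𝒢 : GraphClass) (h𝒢 : MonotoneClass 𝒢)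
    {V : Type} [Fintype V] (H : SimpleGraph V)
    (L : Set (Set V × Set V)) (hL : IsIndepCollection H L)
    (hess : EssentialCollection H L) (hdup : Duplicable 𝒢 H L) :
    ∃ (W : Type) (_ : Fintype W) (G'' : SimpleGraph W),
      𝒢 W G'' ∧
      IsSubdivisionLE (Fintype.card V - 2) G''
        (SimpleGraph.fromRel fun a b =>
          H.Adj a b ∨ ∃ p ∈ L, a ∈ p.1 ∩ p.2 ∧ b ∈ p.1 ∩ p.2) := by
  classical
  obtain ⟨k, ⟨-, hk𝒢⟩, hk⟩ := hdup.exists_gt (Fintype.card (Sym2 V))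
  obtain ⟨m, rfl⟩ := Nat.exists_eq_add_of_lt hk
  let ι : Sym2 V → Fin (Fintype.card (Sym2 V) + m + 1) :=
    fun e => (Fin.castLE (by omega) (Fintype.equivFin _ e)).succ
  have hι : Function.Injective ι :=
    (Fin.succ_injective _).comp ((Fin.castLE_injective _).comp (Fintype.equivFin _).injective)
  choose p hp using fun u v (h : (separatorCompletion H L).Adj u v) =>
    exists_wedge_path_of_separatorCompletion_adj hL hess h 0 (ι s(u, v))
  obtain ⟨W, hW, G'', hG'', hsub⟩ := exists_subgraphOf_isSubdivisionLE
    (n := Fintype.card V - 2) (f := wedgeCopy H (interB L) 0) (p := fun _ _ h => p _ _ h)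
    (wedgeCopy_injective 0)
    (fun u v h => ⟨(hp u v h).1, by have := (hp u v h).2.1; omega⟩)
    (isInternallyDisjoint_of_labels (wedgeCopyIndex (interB L)) (some ∘ ι)
      ((Option.some_injective _).comp hι)
      (fun z _ => wedgeCopyIndex_wedgeCopy_ne (Fin.succ_ne_zero _).symm z)
      (fun u v h => (hp u v h).2.2))
  exact ⟨W, hW, G'', h𝒢 _ _ _ _ hG'' hk𝒢, hsub⟩
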